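/- Let 0 < α < 1 and for integers n ≥ 2 define W_n^1 = (−1)^{n−1} C(α−2, n−1) − (n − α/2)^{1−α}/Γ(2−α). There exists a constant C > 0 such that for every integer n ≥ 2, |W_n^1 − (α−2)/(24 Γ(−α) n^{1+α})| ≤ C / n^{2+α}. -/

import Mathlib

/-!
Write `w n = (-1)^(n-1) C(α-2, n-1)` and `F x = (x - α/2)^(1-α) / Γ(2-α) + c x^(-1-α)` with
`c = (α-2) / (24 Γ(-α))`.
The coefficients satisfy `n w (n+1) = (n+1-α) w n`, and expanding `(1+u)^p` up to `O(u^4)` shows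
that `F` satisfies the same recurrence up to `O(x^(-2-α))`: the shift `α/2` kills the `x^(-α)`
term and `c` kills the `x^(-1-α)` term. Hence `F m / w m` moves by `O(n^(1-α) m^(-4) / w n)` from
`m` to `m+1` for `m ≥ n` (Bernoulli's inequality makes `w m / m^(1-α)` increasing), and it tends
to `1` by Euler's limit formula for `Γ`. Summing the increments from `n` to `∞` gives the bound.
-/

open Finset

/-- Generalized binomial coefficient `C(a,k) = a(a-1)⋯(a-k+1)/k!`. -/
noncomputable def genBinom (a : ℝ) : ℕ → ℝ
  | 0 => 1
  | k + 1 => genBinom a k * (a - k) / (k + 1)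

open Filter Topology Set
open scoped Nat

lemma genBinom_mul_sub (p : ℝ) (j : ℕ) :
    genBinom p j * (p - j) = p * genBinom (p - 1) j := by
  induction j with
  | zero => simp [genBinom]
  | succ j ih =>
    rw [genBinom, genBinom, ih]
    push_cast
    ring

lemma genBinom_succ_mul (p : ℝ) (j : ℕ) :
    genBinom p (j + 1) * (j + 1) = p * genBinom (p - 1) j := by
  rw [genBinom, ← genBinom_mul_sub]
  field_simp

lemma hasDerivAt_sum_genBinom_mul_pow (p s : ℝ) (k : ℕ) :
    HasDerivAt (fun v => ∑ j ∈ range (k + 1), genBinom p j * v ^ j)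
      (p * ∑ j ∈ range k, genBinom (p - 1) j * s ^ j) s := by
  refine (HasDerivAt.fun_sum (u := range (k + 1))
    fun j _ => (hasDerivAt_pow j s).const_mul (genBinom p j)).congr_deriv ?_
  rw [sum_range_succ', mul_sum]
  simp only [Nat.cast_add, Nat.cast_one, add_tsub_cancel_right, CharP.cast_eq_zero, zero_mul,
    mul_zero, add_zero]
  refine sum_congr rfl fun j _ => ?_
  rw [← mul_assoc p, ← genBinom_succ_mul]
  ring

lemma rpow_le_rpow_of_mem_Icc_inv {b x p q : ℝ} (hb : 1 ≤ b) (hx : x ∈ Icc b⁻¹ b)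
    (hp : |p| ≤ q) : x ^ p ≤ b ^ q := by
  have hb0 : 0 < b⁻¹ := inv_pos.mpr (by linarith)
  obtain ⟨hp1, hp2⟩ := abs_le.mp hp
  rcases le_total 0 p with h | h
  · calc x ^ p ≤ b ^ p := Real.rpow_le_rpow (hb0.le.trans hx.1) hx.2 h
      _ ≤ b ^ q := Real.rpow_le_rpow_of_exponent_le hb hp2
  · calc x ^ p ≤ b⁻¹ ^ p := Real.rpow_le_rpow_of_nonpos hb0 hx.1 h
      _ = b ^ (-p) := by rw [Real.inv_rpow (by linarith), Real.rpow_neg (by linarith)]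
      _ ≤ b ^ q := Real.rpow_le_rpow_of_exponent_le hb (by linarith)

-- Differentiating lowers both `p` and `k` by one, so the hypotheses on `p` survive the induction.
theorem abs_one_add_rpow_sub_sum_le (k : ℕ) {p u : ℝ} (hp : p ≤ 1) (hpk : -5 ≤ p - k)
    (hu : |u| ≤ 2 / 3) :
    |(1 + u) ^ p - ∑ j ∈ range k, genBinom p j * u ^ j| ≤ 243 * 4 ^ k * |u| ^ k := by
  induction k generalizing p u with
  | zero =>
    obtain ⟨hu1, hu2⟩ := abs_le.mp hu
    have h := rpow_le_rpow_of_mem_Icc_inv (b := 3) (x := 1 + u) (q := 5) (by norm_num)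
      ⟨by norm_num; linarith, by linarith⟩ (abs_le.mpr ⟨by simpa using hpk, by linarith⟩)
    rw [sum_range_zero, sub_zero, abs_of_nonneg (Real.rpow_nonneg (by linarith) _)]
    norm_num at h ⊢
    exact h
  | succ k ih =>
    have hp4 : |p| ≤ 4 := by
      push_cast at hpk
      exact abs_le.mpr ⟨by linarith [(k.cast_nonneg : (0 : ℝ) ≤ k)], by linarith⟩
    have hseg : ∀ s ∈ uIcc 0 u, |s| ≤ |u| := fun s hs => by
      simpa using abs_sub_left_of_mem_uIcc hs
    have hderiv : ∀ s ∈ uIcc 0 u, HasDerivAt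
        (fun v => (1 + v) ^ p - ∑ j ∈ range (k + 1), genBinom p j * v ^ j)
        (p * ((1 + s) ^ (p - 1) - ∑ j ∈ range k, genBinom (p - 1) j * s ^ j)) s := by
      intro s hs
      have h1s : 0 < 1 + s := by linarith [(abs_le.mp ((hseg s hs).trans hu)).1]
      have hpow := ((hasDerivAt_id s).const_add 1).rpow_const (p := p) (Or.inl h1s.ne')
      exact (hpow.sub (hasDerivAt_sum_genBinom_mul_pow p s k)).congr_deriv (by simp [mul_sub])
    have hbound : ∀ s ∈ uIcc 0 u, ‖p * ((1 + s) ^ (p - 1) -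
        ∑ j ∈ range k, genBinom (p - 1) j * s ^ j)‖ ≤ 243 * 4 ^ (k + 1) * |u| ^ k := by
      intro s hs
      have hs' := hseg s hs
      have := ih (p := p - 1) (u := s) (by linarith) (by push_cast at hpk ⊢; linarith)
        (hs'.trans hu)
      rw [Real.norm_eq_abs, abs_mul]
      calc |p| * |(1 + s) ^ (p - 1) - ∑ j ∈ range k, genBinom (p - 1) j * s ^ j|
          ≤ 4 * (243 * 4 ^ k * |s| ^ k) := mul_le_mul hp4 this (abs_nonneg _) (by norm_num)
        _ ≤ 4 * (243 * 4 ^ k * |u| ^ k) := by gcongr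
        _ = 243 * 4 ^ (k + 1) * |u| ^ k := by ring
    have hmvt := (convex_uIcc (0 : ℝ) u).norm_image_sub_le_of_norm_hasDerivWithin_le
      (fun s hs => (hderiv s hs).hasDerivWithinAt) hbound left_mem_uIcc right_mem_uIcc
    simpa [sum_range_succ', genBinom, Real.norm_eq_abs, pow_succ, mul_assoc] using hmvt

lemma rpow_mul_rpow_eq_pow {x : ℝ} (hx : 0 < x) {a b : ℝ} {k : ℕ} (h : a + b = k) :
    x ^ a * x ^ b = x ^ k := by
  rw [← Real.rpow_add hx, h, Real.rpow_natCast]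

lemma abs_sub_le_of_tendsto_of_abs_succ_sub_le {g δ : ℕ → ℝ} {L S : ℝ} {n : ℕ}
    (hg : Tendsto g atTop (𝓝 L)) (hstep : ∀ m, n ≤ m → |g (m + 1) - g m| ≤ δ m)
    (hS : ∀ N, ∑ m ∈ Ico n N, δ m ≤ S) : |g n - L| ≤ S := by
  rw [← Real.dist_eq]
  refine le_of_tendsto (tendsto_const_nhds.dist hg) (eventually_atTop.2 ⟨n, fun N hN => ?_⟩)
  refine (dist_le_Ico_sum_of_dist_le hN fun hk _ => ?_).trans (hS N)
  rw [dist_comm, Real.dist_eq]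
  exact hstep _ hk

lemma sum_Ico_inv_pow_four_le {n : ℕ} (hn : 1 ≤ n) (N : ℕ) :
    ∑ m ∈ Ico n N, ((m : ℝ) ^ 4)⁻¹ ≤ 2 / n ^ 3 := by
  obtain ⟨k, rfl⟩ := exists_add_of_le hn
  rw [add_comm 1 k]
  calc ∑ m ∈ Ico (k + 1) N, ((m : ℝ) ^ 4)⁻¹
      ≤ ∑ m ∈ Ico (k + 1) N, (((k + 1 : ℕ) : ℝ) ^ 2)⁻¹ * ((m : ℝ) ^ 2)⁻¹ := by
        gcongr with m hm
        have hkm : ((k + 1 : ℕ) : ℝ) ≤ m := by exact_mod_cast (mem_Ico.mp hm).1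
        have hk0 : (0 : ℝ) < ((k + 1 : ℕ) : ℝ) := by positivity
        rw [← mul_inv, show (m : ℝ) ^ 4 = m ^ 2 * m ^ 2 by ring]
        exact inv_anti₀ (mul_pos (pow_pos hk0 2) (pow_pos (hk0.trans_le hkm) 2)) (by gcongr)
    _ = (((k + 1 : ℕ) : ℝ) ^ 2)⁻¹ * ∑ m ∈ Ioo k N, ((m : ℝ) ^ 2)⁻¹ := by
        rw [← mul_sum, Finset.Ico_add_one_left_eq_Ioo]
    _ ≤ (((k + 1 : ℕ) : ℝ) ^ 2)⁻¹ * (2 / (k + 1)) := by gcongr; exact sum_Ioo_inv_sq_le k N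
    _ = 2 / ((k + 1 : ℕ) : ℝ) ^ 3 := by push_cast; field_simp

lemma mul_rpow_div_sq {x y : ℝ} (hx : 0 < x) (hy : 0 < y) (a : ℝ) :
    (x * y) ^ a / (x * y) ^ 2 = x ^ a / x ^ 2 * y ^ (a - 2) := by
  rw [Real.mul_rpow hx.le hy.le, show a - 2 = a - (2 : ℕ) by norm_num,
    Real.rpow_sub_natCast hy.ne']
  ring

lemma abs_defect_shifted_rpow_sub_le {α t : ℝ} (hα0 : 0 ≤ α) (hα1 : α ≤ 1)
    (ht : 3 / 2 ≤ t) :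
    |(t + α / 2) * (t + 1) ^ (1 - α) - (t + 1 - α / 2) * t ^ (1 - α)
        - α * (1 - α) * (2 - α) / 12 * (t ^ (1 - α) / t ^ 2)|
      ≤ 125000 * (t ^ (1 - α) / t ^ 3) := by
  have ht0 : 0 < t := by linarith
  have htβ : 0 ≤ t ^ (1 - α) := Real.rpow_nonneg ht0.le _
  set u := t⁻¹ with hu
  have hu0 : 0 < u := inv_pos.mpr ht0
  have hu23 : |u| ≤ 2 / 3 := by
    rw [abs_of_pos hu0, hu, inv_le_comm₀ ht0 (by norm_num)]; linarith
  have hsplit : (t + 1) ^ (1 - α) = t ^ (1 - α) * (1 + u) ^ (1 - α) := by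
    rw [← Real.mul_rpow ht0.le (by positivity), mul_add, mul_one, hu, mul_inv_cancel₀ ht0.ne']
  set T := ∑ j ∈ range 4, genBinom (1 - α) j * u ^ j with hT
  have hTval : T = 1 + (1 - α) * u + (1 - α) * (-α) / 2 * u ^ 2
      + (1 - α) * (-α) * (-1 - α) / 6 * u ^ 3 := by
    simp only [hT, sum_range_succ, sum_range_zero, genBinom]
    push_cast; ring
  have hrem := abs_one_add_rpow_sub_sum_le 4 (p := 1 - α) (by linarith) (by norm_num; linarith)
    hu23
  rw [← hT, abs_of_pos hu0] at hrem
  -- In powers of `u`, the coefficients of `u ^ 0` and `u ^ 1` vanish, that of `u ^ 2` is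
  -- `α (1 - α) (2 - α) / 12` and that of `u ^ 3` is `α ^ 2 (1 - α) (1 + α) / 12`.
  have key : (t + α / 2) * (t + 1) ^ (1 - α) - (t + 1 - α / 2) * t ^ (1 - α)
        - α * (1 - α) * (2 - α) / 12 * (t ^ (1 - α) / t ^ 2)
      = t ^ (1 - α) / t ^ 3 * (α ^ 2 * (1 - α) * (1 + α) / 12
          + t ^ 3 * (t + α / 2) * ((1 + u) ^ (1 - α) - T)) := by
    rw [hsplit, hTval, hu]
    field_simp
    ring
  have hB : |α ^ 2 * (1 - α) * (1 + α) / 12| ≤ 1 := by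
    have hα2 : 0 ≤ α ^ 2 := sq_nonneg α
    rw [abs_le]
    constructor <;> nlinarith [mul_nonneg hα2 (sub_nonneg.2 hα1)]
  have hR : |t ^ 3 * (t + α / 2) * ((1 + u) ^ (1 - α) - T)| ≤ 124416 := by
    rw [abs_mul, abs_of_pos (by positivity)]
    calc t ^ 3 * (t + α / 2) * |(1 + u) ^ (1 - α) - T|
        ≤ t ^ 3 * (2 * t) * (243 * 4 ^ 4 * u ^ 4) := by gcongr; linarith
      _ = 124416 := by rw [hu]; field_simp; norm_num
  rw [key, abs_mul, abs_of_nonneg (by positivity)]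
  calc t ^ (1 - α) / t ^ 3 * |α ^ 2 * (1 - α) * (1 + α) / 12
          + t ^ 3 * (t + α / 2) * ((1 + u) ^ (1 - α) - T)|
      ≤ t ^ (1 - α) / t ^ 3 * (1 + 124416) := by
        gcongr; exact (abs_add_le _ _).trans (add_le_add hB hR)
    _ ≤ 125000 * (t ^ (1 - α) / t ^ 3) := by nlinarith [div_nonneg htβ (pow_nonneg ht0.le 3)]

lemma abs_rpow_div_sq_sub_le {α x : ℝ} (hα0 : 0 ≤ α) (hα1 : α ≤ 1) (hx : 2 ≤ x) :
    |(x - α / 2) ^ (1 - α) / (x - α / 2) ^ 2 - x ^ (1 - α) / x ^ 2|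
      ≤ 500 * (x ^ (1 - α) / x ^ 3) := by
  have hx0 : 0 < x := by linarith
  set w := -α / (2 * x) with hw
  have hw_abs : |w| ≤ 1 / (2 * x) := by
    rw [hw, abs_div, abs_neg, abs_of_nonneg hα0, abs_of_pos (by positivity)]
    gcongr
  have hw23 : |w| ≤ 2 / 3 :=
    hw_abs.trans (by rw [div_le_div_iff₀ (by positivity) (by norm_num)]; linarith)
  have hw1 : 0 < 1 + w := by linarith [(abs_le.mp hw23).1]
  have hsplit : x - α / 2 = x * (1 + w) := by rw [hw]; field_simp; ring
  have hrem := abs_one_add_rpow_sub_sum_le 1 (p := 1 - α - 2) (u := w) (by linarith)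
    (by norm_num; linarith) hw23
  simp only [sum_range_one, genBinom, pow_zero, mul_one, pow_one] at hrem
  rw [hsplit, mul_rpow_div_sq hx0 hw1, ← mul_sub_one, abs_mul,
    abs_of_nonneg (by positivity)]
  calc x ^ (1 - α) / x ^ 2 * |(1 + w) ^ (1 - α - 2) - 1|
      ≤ x ^ (1 - α) / x ^ 2 * (243 * 4 * (1 / (2 * x))) := by gcongr; linarith
    _ ≤ 500 * (x ^ (1 - α) / x ^ 3) := by
      rw [show x ^ (1 - α) / x ^ 2 * (243 * 4 * (1 / (2 * x))) = 486 * (x ^ (1 - α) / x ^ 3) by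
        field_simp; ring]
      gcongr; norm_num

lemma abs_defect_rpow_div_sq_add_le {α x : ℝ} (hα0 : 0 ≤ α) (hα1 : α ≤ 1)
    (hx : 2 ≤ x) :
    |x * ((x + 1) ^ (1 - α) / (x + 1) ^ 2) - (x + 1 - α) * (x ^ (1 - α) / x ^ 2)
        + 2 * (x ^ (1 - α) / x ^ 2)| ≤ 3888 * (x ^ (1 - α) / x ^ 3) := by
  have hx0 : 0 < x := by linarith
  set v := x⁻¹ with hv
  have hv0 : 0 < v := inv_pos.mpr hx0
  have hv23 : |v| ≤ 2 / 3 := by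
    rw [abs_of_pos hv0, hv, inv_le_comm₀ hx0 (by norm_num)]; linarith
  have hsplit : x + 1 = x * (1 + v) := by rw [hv]; field_simp
  have hT : ∑ j ∈ range 2, genBinom (1 - α - 2) j * v ^ j = 1 + (-1 - α) * v := by
    simp only [sum_range_succ, sum_range_zero, genBinom]
    push_cast; ring
  have hrem := abs_one_add_rpow_sub_sum_le 2 (p := 1 - α - 2) (u := v) (by linarith)
    (by norm_num; linarith) hv23
  rw [hT, abs_of_pos hv0] at hrem
  have key : x * ((x + 1) ^ (1 - α) / (x + 1) ^ 2) - (x + 1 - α) * (x ^ (1 - α) / x ^ 2)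
        + 2 * (x ^ (1 - α) / x ^ 2)
      = x ^ (1 - α) / x ^ 3 * (x ^ 2 * ((1 + v) ^ (1 - α - 2) - (1 + (-1 - α) * v))) := by
    rw [hsplit, mul_rpow_div_sq hx0 (by positivity), ← hsplit, hv]
    field_simp
    ring
  rw [key, abs_mul, abs_mul, abs_of_nonneg (by positivity), abs_of_nonneg (by positivity)]
  calc x ^ (1 - α) / x ^ 3 * (x ^ 2 * |(1 + v) ^ (1 - α - 2) - (1 + (-1 - α) * v)|)
      ≤ x ^ (1 - α) / x ^ 3 * (x ^ 2 * (243 * 4 ^ 2 * v ^ 2)) := by gcongr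
    _ = 3888 * (x ^ (1 - α) / x ^ 3) := by rw [hv]; field_simp; norm_num

lemma two_mul_div_Gamma_neg_mul_Gamma_two_sub {α : ℝ} (hα0 : 0 < α) (hα1 : α < 1) :
    2 * ((α - 2) / (24 * Real.Gamma (-α))) * Real.Gamma (2 - α)
      = α * (1 - α) * (2 - α) / 12 := by
  have h1 : Real.Gamma (1 - α) = -α * Real.Gamma (-α) := by
    rw [← Real.Gamma_add_one (by linarith)]; ring_nf
  have h2 : Real.Gamma (2 - α) = (1 - α) * Real.Gamma (1 - α) := by
    rw [← Real.Gamma_add_one (by linarith)]; ring_nf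
  have hΓ : Real.Gamma (-α) ≠ 0 := by
    intro h
    have := Real.Gamma_pos_of_pos (show 0 < 1 - α by linarith)
    rw [h1, h, mul_zero] at this
    exact lt_irrefl 0 this
  rw [h2, h1]
  field_simp
  ring

-- `x ^ (1 - α) / x ^ 2` stands for `x ^ (-1 - α)`, so that `1 - α` is the only real exponent.
noncomputable def signedBinomApprox (α x : ℝ) : ℝ :=
  (x - α / 2) ^ (1 - α) / Real.Gamma (2 - α)
    + (α - 2) / (24 * Real.Gamma (-α)) * (x ^ (1 - α) / x ^ 2)

lemma exists_abs_defect_signedBinomApprox_le {α : ℝ} (hα0 : 0 < α) (hα1 : α < 1) :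
    ∃ K, 0 < K ∧ ∀ x : ℝ, 2 ≤ x →
      |x * signedBinomApprox α (x + 1) - (x + 1 - α) * signedBinomApprox α x|
        ≤ K * (x ^ (1 - α) / x ^ 3) := by
  set c := (α - 2) / (24 * Real.Gamma (-α))
  set Γ₂ := Real.Gamma (2 - α)
  have hΓ₂ : 0 < Γ₂ := Real.Gamma_pos_of_pos (by linarith)
  have hc : 2 * c * Γ₂ = α * (1 - α) * (2 - α) / 12 :=
    two_mul_div_Gamma_neg_mul_Gamma_two_sub hα0 hα1
  refine ⟨500000 / Γ₂ + 5000 * |c|, by positivity, fun x hx => ?_⟩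
  have hx0 : 0 < x := by linarith
  set t := x - α / 2 with ht
  have ht0 : 0 < t := by linarith
  have hψ := abs_defect_shifted_rpow_sub_le hα0.le hα1.le (t := t) (by linarith)
  have hd := abs_rpow_div_sq_sub_le hα0.le hα1.le hx
  have hη := abs_defect_rpow_div_sq_add_le hα0.le hα1.le hx
  have htx : t ^ (1 - α) / t ^ 3 ≤ 4 * (x ^ (1 - α) / x ^ 3) := by
    calc t ^ (1 - α) / t ^ 3 ≤ x ^ (1 - α) / (x ^ 3 / 4) := by
          gcongr
          · linarith
          · nlinarith [pow_le_pow_left₀ (by linarith : 0 ≤ 3 / 4 * x)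
              (show 3 / 4 * x ≤ t by linarith) 3]
      _ = 4 * (x ^ (1 - α) / x ^ 3) := by field_simp
  have key : x * signedBinomApprox α (x + 1) - (x + 1 - α) * signedBinomApprox α x
      = ((t + α / 2) * (t + 1) ^ (1 - α) - (t + 1 - α / 2) * t ^ (1 - α)
          - α * (1 - α) * (2 - α) / 12 * (t ^ (1 - α) / t ^ 2)) / Γ₂
        + 2 * c * (t ^ (1 - α) / t ^ 2 - x ^ (1 - α) / x ^ 2)
        + c * (x * ((x + 1) ^ (1 - α) / (x + 1) ^ 2) - (x + 1 - α) * (x ^ (1 - α) / x ^ 2)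
          + 2 * (x ^ (1 - α) / x ^ 2)) := by
    have hF : ∀ y, signedBinomApprox α y
        = (y - α / 2) ^ (1 - α) / Γ₂ + c * (y ^ (1 - α) / y ^ 2) := fun y => rfl
    -- `hc` makes the `t ^ (1 - α) / t ^ 2` terms of the first two summands cancel.
    rw [hF, hF, show x + 1 - α / 2 = t + 1 by ring, ← ht, ← hc,
      show x = t + α / 2 by ring]
    field_simp
    ring
  set X := x ^ (1 - α) / x ^ 3
  have hX : 0 ≤ X := by positivity
  rw [key]
  refine (abs_add_three _ _ _).trans ?_
  rw [abs_div, abs_of_pos hΓ₂, abs_mul, abs_mul, abs_mul, abs_two]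
  calc _ ≤ 125000 * (4 * X) / Γ₂ + 2 * |c| * (500 * X) + |c| * (3888 * X) := by
        gcongr
        exact hψ.trans (by gcongr)
    _ ≤ (500000 / Γ₂ + 5000 * |c|) * X := by
        rw [add_mul, div_mul_eq_mul_div, show 125000 * (4 * X) = 500000 * X by ring]
        nlinarith [mul_nonneg (abs_nonneg c) hX]

lemma neg_one_pow_mul_genBinom (a : ℝ) (k : ℕ) :
    (-1) ^ k * genBinom a k = (∏ j ∈ range k, (j - a)) / k ! := by
  induction k with
  | zero => simp [genBinom]
  | succ k ih =>
    rw [genBinom, prod_range_succ, Nat.factorial_succ, pow_succ,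
      show (-1) ^ k * -1 * (genBinom a k * (a - k) / (k + 1))
        = (-1) ^ k * genBinom a k * ((k - a) / (k + 1)) by ring, ih]
    push_cast
    field_simp

noncomputable def signedBinom (α : ℝ) (n : ℕ) : ℝ :=
  (-1) ^ (n - 1) * genBinom (α - 2) (n - 1)

lemma signedBinom_succ_eq (α : ℝ) (m : ℕ) :
    signedBinom α (m + 1) = (∏ j ∈ range m, (j + 2 - α)) / m ! := by
  simp only [signedBinom, add_tsub_cancel_right, neg_one_pow_mul_genBinom]
  congr 2 with j
  ring

lemma signedBinom_pos {α : ℝ} (hα : α < 2) {n : ℕ} (hn : 1 ≤ n) :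
    0 < signedBinom α n := by
  obtain ⟨m, rfl⟩ := exists_add_of_le hn
  rw [add_comm, signedBinom_succ_eq]
  exact div_pos (prod_pos fun j _ => by linarith [(j.cast_nonneg : (0 : ℝ) ≤ j)])
    (by positivity)

lemma natCast_mul_signedBinom_succ (α : ℝ) {m : ℕ} (hm : 1 ≤ m) :
    m * signedBinom α (m + 1) = (m + 1 - α) * signedBinom α m := by
  obtain ⟨k, rfl⟩ := exists_add_of_le hm
  rw [add_comm 1 k, signedBinom_succ_eq, signedBinom_succ_eq, prod_range_succ, Nat.factorial_succ]
  push_cast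
  field_simp
  ring

lemma one_sub_mul_GammaSeq_mul_signedBinom_succ {α : ℝ} (hα : α < 1) (m : ℕ) :
    (1 - α) * Real.GammaSeq (1 - α) m * signedBinom α (m + 1) = (m : ℝ) ^ (1 - α) := by
  have hprod : ∏ j ∈ range m, ((j : ℝ) + 2 - α) ≠ 0 :=
    prod_ne_zero_iff.mpr fun j _ => by linarith [(j.cast_nonneg : (0 : ℝ) ≤ j)]
  rw [signedBinom_succ_eq, Real.GammaSeq, prod_range_succ']
  have : ∏ j ∈ range m, (1 - α + ((j + 1 : ℕ) : ℝ))
      = ∏ j ∈ range m, ((j : ℝ) + 2 - α) := by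
    congr 1 with j; push_cast; ring
  rw [this]
  have hα' : 1 - α ≠ 0 := by linarith
  field_simp
  simp [hα']

lemma signedBinom_div_rpow_le_succ {α : ℝ} (hα0 : 0 ≤ α) (hα1 : α ≤ 1) {m : ℕ}
    (hm : 1 ≤ m) :
    signedBinom α m / (m : ℝ) ^ (1 - α)
      ≤ signedBinom α (m + 1) / ((m + 1 : ℕ) : ℝ) ^ (1 - α) := by
  have hm0 : (0 : ℝ) < m := by exact_mod_cast hm
  have hw := (signedBinom_pos (by linarith) hm).le
  have hbern : ((m + 1 : ℝ) / m) ^ (1 - α) ≤ (m + 1 - α) / m := by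
    have := rpow_one_add_le_one_add_mul_self (s := 1 / (m : ℝ)) (p := 1 - α)
      (by linarith [one_div_pos.mpr hm0]) (by linarith) (by linarith)
    calc ((m + 1 : ℝ) / m) ^ (1 - α) = (1 + 1 / (m : ℝ)) ^ (1 - α) := by congr 1; field_simp
      _ ≤ 1 + (1 - α) * (1 / m) := this
      _ = (m + 1 - α) / m := by field_simp; ring
  rw [Real.div_rpow (by positivity) hm0.le] at hbern
  have hrec := natCast_mul_signedBinom_succ α hm
  rw [div_le_div_iff₀ (by positivity) (by positivity)]
  push_cast
  rw [div_le_div_iff₀ (by positivity) hm0] at hbern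
  refine le_of_mul_le_mul_left ?_ hm0
  calc (m : ℝ) * (signedBinom α m * (m + 1) ^ (1 - α))
      = signedBinom α m * ((m + 1) ^ (1 - α) * m) := by ring
    _ ≤ signedBinom α m * ((m + 1 - α) * m ^ (1 - α)) := by gcongr
    _ = m * (signedBinom α (m + 1) * m ^ (1 - α)) := by rw [← mul_assoc (m : ℝ), hrec]; ring

lemma signedBinom_div_rpow_mono {α : ℝ} (hα0 : 0 ≤ α) (hα1 : α ≤ 1) {n m : ℕ}
    (hn : 1 ≤ n) (hnm : n ≤ m) :
    signedBinom α n / (n : ℝ) ^ (1 - α) ≤ signedBinom α m / (m : ℝ) ^ (1 - α) := by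
  induction m, hnm using Nat.le_induction with
  | base => exact le_rfl
  | succ m hnm ih => exact ih.trans (signedBinom_div_rpow_le_succ hα0 hα1 (hn.trans hnm))

lemma tendsto_signedBinomApprox_div_signedBinom {α : ℝ} (hα1 : α < 1) :
    Tendsto (fun N : ℕ => signedBinomApprox α N / signedBinom α N) atTop (𝓝 1) := by
  have hβ : 0 < 1 - α := by linarith
  have hΓ₂ : Real.Gamma (2 - α) = (1 - α) * Real.Gamma (1 - α) := by
    rw [← Real.Gamma_add_one hβ.ne']; ring_nf
  have hΓ₂0 : Real.Gamma (2 - α) ≠ 0 := (Real.Gamma_pos_of_pos (by linarith)).ne'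
  have hratio : ∀ a : ℝ,
      Tendsto (fun m : ℕ => (((m : ℝ) + a) / m) ^ (1 - α)) atTop (𝓝 1) := by
    intro a
    simpa using ((tendsto_natCast_div_add_atTop a).inv₀ one_ne_zero).rpow_const
      (p := 1 - α) (Or.inl (inv_ne_zero one_ne_zero))
  have hlim := (((hratio (1 - α / 2)).div_const (Real.Gamma (2 - α))).add
    (((hratio 1).const_mul ((α - 2) / (24 * Real.Gamma (-α)))).mul
      (tendsto_one_div_add_atTop_nhds_zero_nat.pow 2))).mul
      ((Real.GammaSeq_tendsto_Gamma (1 - α)).const_mul (1 - α))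
  rw [← hΓ₂] at hlim
  simp only [mul_one, ne_eq, OfNat.ofNat_ne_zero, not_false_eq_true, zero_pow, mul_zero, add_zero,
    one_div_mul_cancel hΓ₂0] at hlim
  rw [← tendsto_add_atTop_iff_nat 1]
  refine hlim.congr' ?_
  filter_upwards [eventually_ge_atTop 1] with m hm
  have hm0 : (0 : ℝ) < m := by exact_mod_cast hm
  have hw := one_sub_mul_GammaSeq_mul_signedBinom_succ hα1 m
  rw [eq_div_iff (signedBinom_pos (by linarith) (by omega)).ne', Real.div_rpow (by linarith)
    hm0.le, Real.div_rpow (by positivity) hm0.le]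
  simp only [signedBinomApprox]
  push_cast
  have hmβ : (m : ℝ) ^ (1 - α) ≠ 0 := (Real.rpow_pos_of_pos hm0 _).ne'
  rw [mul_assoc, hw, ← add_sub_assoc]
  field_simp

lemma abs_signedBinomApprox_div_signedBinom_succ_sub_le {α K : ℝ} (hα0 : 0 < α) (hα1 : α < 1)
    (hK0 : 0 ≤ K) {n m : ℕ} (hn : 2 ≤ n) (hnm : n ≤ m)
    (hdefect : |m * signedBinomApprox α (m + 1) - (m + 1 - α) * signedBinomApprox α m|
      ≤ K * ((m : ℝ) ^ (1 - α) / m ^ 3)) :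
    |signedBinomApprox α (m + 1 : ℕ) / signedBinom α (m + 1)
        - signedBinomApprox α m / signedBinom α m|
      ≤ K * ((n : ℝ) ^ (1 - α) / signedBinom α n) * ((m : ℝ) ^ 4)⁻¹ := by
  have hm0 : (0 : ℝ) < m := by norm_cast; omega
  have hwn := signedBinom_pos (α := α) (by linarith) (n := n) (by omega)
  have hwm := signedBinom_pos (α := α) (by linarith) (n := m) (by omega)
  have hwm1 := signedBinom_pos (α := α) (by linarith) (n := m + 1) (by omega)
  have hrec := natCast_mul_signedBinom_succ α (m := m) (by omega)
  have hgrowth : signedBinom α n * (m : ℝ) ^ (1 - α)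
      ≤ (n : ℝ) ^ (1 - α) * signedBinom α (m + 1) := by
    have hmono := signedBinom_div_rpow_mono hα0.le hα1.le (n := n) (m := m + 1)
      (by omega) (by omega)
    rw [div_le_div_iff₀ (by positivity) (by positivity)] at hmono
    calc signedBinom α n * (m : ℝ) ^ (1 - α)
        ≤ signedBinom α n * ((m + 1 : ℕ) : ℝ) ^ (1 - α) := by gcongr; omega
      _ ≤ (n : ℝ) ^ (1 - α) * signedBinom α (m + 1) := by linarith
  have hdiff : signedBinomApprox α (m + 1 : ℕ) / signedBinom α (m + 1)
        - signedBinomApprox α m / signedBinom α m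
      = (m * signedBinomApprox α (m + 1) - (m + 1 - α) * signedBinomApprox α m)
        / (m * signedBinom α (m + 1)) := by
    push_cast
    rw [div_sub_div _ _ hwm1.ne' hwm.ne', div_eq_div_iff (by positivity) (by positivity)]
    linear_combination (-(signedBinomApprox α m * signedBinom α (m + 1))) * hrec
  rw [hdiff, abs_div, abs_of_pos (show (0 : ℝ) < m * signedBinom α (m + 1) by positivity)]
  calc |m * signedBinomApprox α (m + 1) - (m + 1 - α) * signedBinomApprox α m|
        / (m * signedBinom α (m + 1))
      ≤ K * ((m : ℝ) ^ (1 - α) / m ^ 3) / (m * signedBinom α (m + 1)) := by gcongr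
    _ ≤ K * ((n : ℝ) ^ (1 - α) / signedBinom α n) * ((m : ℝ) ^ 4)⁻¹ := by
        have hmn : (m : ℝ) ^ (1 - α) / m ^ 3
            ≤ (n : ℝ) ^ (1 - α) * signedBinom α (m + 1) / (signedBinom α n * m ^ 3) := by
          rw [div_le_div_iff₀ (by positivity) (by positivity), ← mul_assoc,
            mul_comm _ (signedBinom α n)]
          gcongr
        calc K * ((m : ℝ) ^ (1 - α) / m ^ 3) / (m * signedBinom α (m + 1))
            ≤ K * ((n : ℝ) ^ (1 - α) * signedBinom α (m + 1) / (signedBinom α n * m ^ 3))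
              / (m * signedBinom α (m + 1)) := by gcongr
          _ = K * ((n : ℝ) ^ (1 - α) / signedBinom α n) * ((m : ℝ) ^ 4)⁻¹ := by
            field_simp

theorem exists_abs_signedBinom_sub_signedBinomApprox_le {α : ℝ} (hα0 : 0 < α) (hα1 : α < 1) :
    ∃ C > 0, ∀ n : ℕ, 2 ≤ n →
      |signedBinom α n - signedBinomApprox α n| ≤ C * ((n : ℝ) ^ (1 - α) / n ^ 3) := by
  obtain ⟨K, hK0, hK⟩ := exists_abs_defect_signedBinomApprox_le hα0 hα1
  refine ⟨2 * K, by positivity, fun n hn => ?_⟩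
  have hw := signedBinom_pos (α := α) (by linarith) (n := n) (by omega)
  set B := K * ((n : ℝ) ^ (1 - α) / signedBinom α n)
  have key := abs_sub_le_of_tendsto_of_abs_succ_sub_le
    (tendsto_signedBinomApprox_div_signedBinom hα1)
    (δ := fun m => B * ((m : ℝ) ^ 4)⁻¹) (S := B * (2 / n ^ 3)) (n := n)
    (fun m hm => abs_signedBinomApprox_div_signedBinom_succ_sub_le hα0 hα1 hK0.le hn hm
      (by exact_mod_cast hK m (by exact_mod_cast hn.trans hm)))
    (fun N => by rw [← mul_sum]; gcongr; exact sum_Ico_inv_pow_four_le (by omega) N)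
  calc |signedBinom α n - signedBinomApprox α n|
      = signedBinom α n * |signedBinomApprox α n / signedBinom α n - 1| := by
        rw [← abs_of_pos hw, ← abs_mul, abs_of_pos hw, ← abs_neg]
        congr 1
        field_simp
        ring
    _ ≤ signedBinom α n * (B * (2 / n ^ 3)) := by gcongr
    _ = 2 * K * ((n : ℝ) ^ (1 - α) / n ^ 3) := by
        simp only [B]
        field_simp

theorem stmt10 (α : ℝ) (hα0 : 0 < α) (hα1 : α < 1) :
    ∃ C > (0:ℝ), ∀ n : ℕ, 2 ≤ n →
      |((-1 : ℝ) ^ (n - 1) * genBinom (α - 2) (n - 1) -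
            ((n : ℝ) - α / 2) ^ (1 - α) / Real.Gamma (2 - α)) -
          (α - 2) / (24 * Real.Gamma (-α) * (n : ℝ) ^ (1 + α))| ≤
        C / (n : ℝ) ^ (2 + α) := by
  obtain ⟨C, hC, hbound⟩ := exists_abs_signedBinom_sub_signedBinomApprox_le hα0 hα1
  refine ⟨C, hC, fun n hn => ?_⟩
  have hn0 : (0 : ℝ) < n := by norm_cast; omega
  have h2 := rpow_mul_rpow_eq_pow hn0 (a := 1 + α) (b := 1 - α) (k := 2) (by push_cast; ring)
  have h3 := rpow_mul_rpow_eq_pow hn0 (a := 2 + α) (b := 1 - α) (k := 3) (by push_cast; ring)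
  have hβ : (n : ℝ) ^ (1 - α) ≠ 0 := (Real.rpow_pos_of_pos hn0 _).ne'
  convert hbound n hn using 2
  · rw [signedBinom, signedBinomApprox, sub_sub, ← h2]
    field_simp
  · rw [← h3]
    field_simp
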